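/- arXiv:1709.01864 — 5 statements merged into one kernel-verified Lean document; each statement's English description precedes it below -/
import Mathlib

section
/- Let U be a sub-Markovian resolvent with sub-invariant σ-finite measure m and weak dual resolvent Û. A function u ∈ L^p(E,m) is U-invariant if and only if it is Û-invariant. -/
open MeasureTheory ProbabilityTheory Filter
open scoped NNReal ENNReal

/-- The resolvent operators acting on real functions: `U_α f (x) = ∫ f d(U α x)`. -/
noncomputable def Uop {E : Type*} [MeasurableSpace E]
    (U : ℝ → Kernel E E) (α : ℝ) (f : E → ℝ) (x : E) : ℝ :=
  ∫ y, f y ∂(U α x)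

/-- `(U_α)` is a sub-Markovian resolvent of kernels: `α U_α 1 ≤ 1`. -/
def SubMarkovResolvent {E : Type*} [MeasurableSpace E] (U : ℝ → Kernel E E) : Prop :=
  ∀ α > (0:ℝ), ∀ x : E, (U α x) Set.univ ≤ ENNReal.ofReal α⁻¹

/-- `m` is sub-invariant for `(U_α)`: `m(α U_α f) ≤ m(f)` for all `f ≥ 0` measurable. -/
def SubInvariantMeasure {E : Type*} [MeasurableSpace E]
    (m : Measure E) (U : ℝ → Kernel E E) : Prop :=
  ∀ α > (0:ℝ), ∀ f : E → ℝ≥0∞, Measurable f →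
    ∫⁻ x, ENNReal.ofReal α * ∫⁻ y, f y ∂(U α x) ∂m ≤ ∫⁻ x, f x ∂m

/-- Weak duality of `(U_α)` and `(Û_α)` w.r.t. `m`: `∫ f U_α g dm = ∫ g Û_α f dm`. -/
def WeakDuality {E : Type*} [MeasurableSpace E]
    (m : Measure E) (U Uhat : ℝ → Kernel E E) : Prop :=
  ∀ α > (0:ℝ), ∀ f g : E → ℝ≥0∞, Measurable f → Measurable g →
    ∫⁻ x, f x * ∫⁻ y, g y ∂(U α x) ∂m = ∫⁻ x, g x * ∫⁻ y, f y ∂(Uhat α x) ∂m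

/-- `u` is `U`-invariant: `U_α(uf) = u U_α f` m-a.e. for all bounded measurable `f`, `α > 0`. -/
def UInvariant {E : Type*} [MeasurableSpace E]
    (m : Measure E) (U : ℝ → Kernel E E) (u : E → ℝ) : Prop :=
  ∀ α > (0:ℝ), ∀ f : E → ℝ, Measurable f → (∃ C, ∀ x, |f x| ≤ C) →
    Uop U α (fun y => u y * f y) =ᵐ[m] fun x => u x * Uop U α f x

/-! For measurable `u`, `U`-invariance means that for every `α` and `m`-a.e. `x` the measure
`U α x` is carried by the level set `{u = u x}`: testing invariance against `1_{|u| ≤ n}` and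
`u 1_{|u| ≤ n}` shows that the variance of `u` under `U α x` on `{|u| ≤ n}` vanishes. This is
equivalent to the absence, for each rational `q`, of `m`-a.e. transitions from `{u < q}` to
`{u > q}` and from `{u > q}` to `{u < q}`. Weak duality `∫ 1_A U_α 1_B dm = ∫ 1_B Û_α 1_A dm`
turns each of these conditions for `U` into the other one for `Û`. It also shows that `m`-null
sets are `U α x`-null for `m`-a.e. `x`, which reduces the theorem to measurable `u`. -/

section

variable {E : Type*} [MeasurableSpace E]

lemma SubMarkovResolvent.isFiniteMeasure {U : ℝ → Kernel E E} (hU : SubMarkovResolvent U)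
    {α : ℝ} (hα : 0 < α) (x : E) : IsFiniteMeasure (U α x) :=
  ⟨(hU α hα x).trans_lt ENNReal.ofReal_lt_top⟩

lemma ae_restrict_eq_const_of_setIntegral_mul_self {μ : Measure E} {s : Set E} {u : E → ℝ}
    {c : ℝ} (hμs : μ s ≠ ∞) (hu : IntegrableOn u s μ)
    (hu_sq : IntegrableOn (fun y => u y * u y) s μ)
    (h₁ : ∫ y in s, u y ∂μ = c * μ.real s)
    (h₂ : ∫ y in s, u y * u y ∂μ = c * ∫ y in s, u y ∂μ) :
    ∀ᵐ y ∂μ.restrict s, u y = c := by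
  have : Fact (μ s < ∞) := ⟨hμs.lt_top⟩
  have hlin : IntegrableOn (fun y => u y * u y - 2 * c * u y) s μ := hu_sq.sub (hu.const_mul _)
  have hsq : (fun y => (u y - c) ^ 2) = fun y => (u y * u y - 2 * c * u y) + c ^ 2 := by
    ext y; ring
  have hvar : ∫ y in s, (u y - c) ^ 2 ∂μ = 0 := by
    rw [hsq, integral_add hlin (integrable_const _), integral_sub hu_sq (hu.const_mul _),
      integral_const_mul, setIntegral_const, h₂, h₁, smul_eq_mul]
    ring
  have hint : IntegrableOn (fun y => (u y - c) ^ 2) s μ := hsq ▸ hlin.add (integrable_const _)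
  filter_upwards [(setIntegral_eq_zero_iff_of_nonneg_ae
    (ae_of_all _ fun y => sq_nonneg (u y - c)) hint).1 hvar] with y hy
  exact sub_eq_zero.1 (pow_eq_zero_iff two_ne_zero |>.1 hy)

lemma ae_ae_eq_iff_forall_rat (m : Measure E) (κ : E → Measure E) (u : E → ℝ) :
    (∀ᵐ x ∂m, ∀ᵐ y ∂κ x, u y = u x) ↔ ∀ q : ℚ,
      (∀ᵐ x ∂m, x ∈ {y | u y < q} → κ x {y | q < u y} = 0) ∧
      (∀ᵐ x ∂m, x ∈ {y | q < u y} → κ x {y | u y < q} = 0) := by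
  constructor
  · intro h q
    constructor <;> filter_upwards [h] with x hx hxq <;>
      refine measure_eq_zero_iff_ae_notMem.2 (hx.mono fun y hy hyq => ?_) <;>
      simp only [Set.mem_ofPred_eq] at hxq hyq <;> linarith
  · intro h
    filter_upwards [ae_all_iff.2 fun q => (h q).1.and (h q).2] with x hx
    have hq : ∀ q : ℚ, ∀ᵐ y ∂κ x, (u x < q → u y ≤ q) ∧ (q < u x → q ≤ u y) := fun q =>
      (eventually_imp_distrib_left.2 fun hxq =>
          (measure_eq_zero_iff_ae_notMem.1 ((hx q).1 hxq)).mono fun _ hy => not_lt.1 hy).and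
        (eventually_imp_distrib_left.2 fun hxq =>
          (measure_eq_zero_iff_ae_notMem.1 ((hx q).2 hxq)).mono fun _ hy => not_lt.1 hy)
    filter_upwards [ae_all_iff.2 hq] with y hy
    exact le_antisymm (le_of_forall_lt_rat_imp_le fun q hq => (hy q).1 hq)
      (le_of_forall_rat_lt_imp_le fun q hq => (hy q).2 hq)

lemma ae_mem_imp_measure_eq_zero_iff_lintegral (m : Measure E) (κ : Kernel E E) {A B : Set E}
    (hA : MeasurableSet A) (hB : MeasurableSet B) :
    (∀ᵐ x ∂m, x ∈ A → κ x B = 0) ↔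
      ∫⁻ x, A.indicator 1 x * ∫⁻ y, B.indicator 1 y ∂(κ x) ∂m = 0 := by
  simp_rw [lintegral_indicator_one hB]
  rw [lintegral_eq_zero_iff (f := fun x => A.indicator 1 x * κ x B)
    ((measurable_one.indicator hA).mul (κ.measurable_coe hB))]
  refine eventually_congr (Eventually.of_forall fun x => ?_)
  by_cases hx : x ∈ A <;> simp [hx]

namespace WeakDuality

variable {m : Measure E} {U Uhat : ℝ → Kernel E E} {α : ℝ}

lemma symm (hdual : WeakDuality m U Uhat) : WeakDuality m Uhat U :=
  fun β hβ f g hf hg => (hdual β hβ g f hg hf).symm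

lemma ae_mem_imp_measure_eq_zero_iff (hdual : WeakDuality m U Uhat) (hα : 0 < α) {A B : Set E}
    (hA : MeasurableSet A) (hB : MeasurableSet B) :
    (∀ᵐ x ∂m, x ∈ A → U α x B = 0) ↔ (∀ᵐ x ∂m, x ∈ B → Uhat α x A = 0) := by
  rw [ae_mem_imp_measure_eq_zero_iff_lintegral m _ hA hB,
    ae_mem_imp_measure_eq_zero_iff_lintegral m _ hB hA,
    hdual α hα _ _ (measurable_one.indicator hA) (measurable_one.indicator hB)]

lemma ae_ae_of_ae (hdual : WeakDuality m U Uhat) (hα : 0 < α) {p : E → Prop}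
    (h : ∀ᵐ y ∂m, p y) : ∀ᵐ x ∂m, ∀ᵐ y ∂(U α x), p y := by
  have hN : ∀ᵐ x ∂m, x ∈ toMeasurable m {y | ¬p y} → Uhat α x Set.univ = 0 :=
    (measure_eq_zero_iff_ae_notMem.1 (by rwa [measure_toMeasurable])).mono
      fun _ hx hxN => absurd hxN hx
  filter_upwards [(hdual.ae_mem_imp_measure_eq_zero_iff hα MeasurableSet.univ
    (measurableSet_toMeasurable _ _)).2 hN] with x hx
  exact measure_mono_null (subset_toMeasurable _ _) (hx trivial)

lemma ae_ae_eq_iff (hdual : WeakDuality m U Uhat) (hα : 0 < α) {u : E → ℝ} (hu : Measurable u) :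
    (∀ᵐ x ∂m, ∀ᵐ y ∂(U α x), u y = u x) ↔ (∀ᵐ x ∂m, ∀ᵐ y ∂(Uhat α x), u y = u x) := by
  have hlt : ∀ q : ℚ, MeasurableSet {y | u y < q} := fun _ => measurableSet_lt hu measurable_const
  have hgt : ∀ q : ℚ, MeasurableSet {y | (q : ℝ) < u y} :=
    fun _ => measurableSet_lt measurable_const hu
  rw [ae_ae_eq_iff_forall_rat, ae_ae_eq_iff_forall_rat]
  refine forall_congr' fun q => ?_
  rw [hdual.ae_mem_imp_measure_eq_zero_iff hα (hlt q) (hgt q),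
    hdual.ae_mem_imp_measure_eq_zero_iff hα (hgt q) (hlt q), and_comm]

end WeakDuality

lemma UInvariant.congr_ae {m : Measure E} {U Uhat : ℝ → Kernel E E} {u u' : E → ℝ}
    (h : UInvariant m U u) (hdual : WeakDuality m U Uhat) (huu' : u =ᵐ[m] u') :
    UInvariant m U u' := by
  intro α hα f hf hfb
  filter_upwards [h α hα f hf hfb, huu', hdual.ae_ae_of_ae hα huu'] with x hx hux huu'x
  calc Uop U α (fun y => u' y * f y) x = Uop U α (fun y => u y * f y) x :=
        integral_congr_ae (huu'x.mono fun y hy => by simp only [hy])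
    _ = u' x * Uop U α f x := by rw [hx, hux]

lemma ae_eq_const_of_integral_mul_indicator {μ : Measure E} [IsFiniteMeasure μ] {u : E → ℝ}
    (hu : Measurable u) {c : ℝ}
    (h₁ : ∀ n : ℕ, ∫ y, u y * {y | |u y| ≤ n}.indicator 1 y ∂μ
      = c * ∫ y, {y | |u y| ≤ n}.indicator 1 y ∂μ)
    (h₂ : ∀ n : ℕ, ∫ y, u y * {y | |u y| ≤ n}.indicator u y ∂μ
      = c * ∫ y, {y | |u y| ≤ n}.indicator u y ∂μ) :
    ∀ᵐ y ∂μ, u y = c := by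
  have hn : ∀ n : ℕ, ∀ᵐ y ∂μ, y ∈ {y | |u y| ≤ n} → u y = c := by
    intro n
    have e₁ := h₁ n
    have e₂ := h₂ n
    set s := {y | |u y| ≤ n}
    have hs : MeasurableSet s := measurableSet_le hu.abs measurable_const
    have hbdd : ∀ᵐ y ∂μ.restrict s, ‖u y‖ ≤ n :=
      (ae_restrict_iff' hs).2 (ae_of_all _ fun y hy => hy)
    have hint : IntegrableOn u s μ :=
      Measure.integrableOn_of_bounded (measure_ne_top _ _) hu.aestronglyMeasurable hbdd
    have hint_sq : IntegrableOn (fun y => u y * u y) s μ :=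
      Measure.integrableOn_of_bounded (M := n * n) (measure_ne_top _ _)
        (hu.mul hu).aestronglyMeasurable (hbdd.mono fun y hy => by
          rw [norm_mul]; exact mul_le_mul hy hy (norm_nonneg _) (Nat.cast_nonneg _))
    simp only [← Set.indicator_mul_right, Pi.one_apply, mul_one, integral_indicator_one hs,
      integral_indicator hs] at e₁ e₂
    exact (ae_restrict_iff' hs).1
      (ae_restrict_eq_const_of_setIntegral_mul_self (measure_ne_top _ _) hint hint_sq e₁ e₂)
  filter_upwards [ae_all_iff.2 hn] with y hy
  exact hy ⌈|u y|⌉₊ (Nat.le_ceil |u y|)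

theorem uInvariant_iff_ae_ae_eq {m : Measure E} {U : ℝ → Kernel E E} (hU : SubMarkovResolvent U)
    {u : E → ℝ} (hu : Measurable u) :
    UInvariant m U u ↔ ∀ α > 0, ∀ᵐ x ∂m, ∀ᵐ y ∂(U α x), u y = u x := by
  constructor
  · intro h α hα
    have hs : ∀ n : ℕ, MeasurableSet {y | |u y| ≤ n} :=
      fun n => measurableSet_le hu.abs measurable_const
    have h₁ := fun n => h α hα _ (measurable_one.indicator (hs n))
      ⟨1, fun y => by by_cases hy : |u y| ≤ n <;> simp [Set.indicator, hy]⟩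
    have h₂ := fun n => h α hα _ (hu.indicator (hs n))
      ⟨n, fun y => by by_cases hy : |u y| ≤ n <;> simp [Set.indicator, hy]⟩
    filter_upwards [ae_all_iff.2 h₁, ae_all_iff.2 h₂] with x hx₁ hx₂
    have := hU.isFiniteMeasure hα x
    exact ae_eq_const_of_integral_mul_indicator hu hx₁ hx₂
  · intro h α hα f _ _
    filter_upwards [h α hα] with x hx
    calc Uop U α (fun y => u y * f y) x = ∫ y, u x * f y ∂(U α x) :=
          integral_congr_ae (hx.mono fun y hy => by simp only [hy])
      _ = u x * Uop U α f x := integral_const_mul _ _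

end

theorem uInvariant_iff_dual_uInvariant_general
    {E : Type*} [MeasurableSpace E] (m : Measure E)
    (U Uhat : ℝ → Kernel E E)
    (hU : SubMarkovResolvent U) (hUhat : SubMarkovResolvent Uhat)
    (hdual : WeakDuality m U Uhat)
    (p : ℝ≥0∞) (u : E → ℝ) (hu : MemLp u p m) :
    UInvariant m U u ↔ UInvariant m Uhat u := by
  obtain ⟨u', hu', huu'⟩ : ∃ u', Measurable u' ∧ u =ᵐ[m] u' :=
    ⟨_, hu.aemeasurable.measurable_mk, hu.aemeasurable.ae_eq_mk⟩
  have hcongr : ∀ {V W : ℝ → Kernel E E}, WeakDuality m V W →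
      (UInvariant m V u ↔ UInvariant m V u') := fun hVW =>
    ⟨fun h => h.congr_ae hVW huu', fun h => h.congr_ae hVW huu'.symm⟩
  rw [hcongr hdual, hcongr hdual.symm, uInvariant_iff_ae_ae_eq hU hu',
    uInvariant_iff_ae_ae_eq hUhat hu']
  exact forall₂_congr fun α hα => hdual.ae_ae_eq_iff hα hu'

/-- For a sub-Markovian resolvent `U` with sub-invariant σ-finite measure `m`
and weak dual resolvent `Û`, a function `u ∈ L^p(E,m)` is `U`-invariant iff `Û`-invariant. -/
theorem uInvariant_iff_dual_uInvariant
    {E : Type*} [MeasurableSpace E] (m : Measure E) [SigmaFinite m]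
    (U Uhat : ℝ → Kernel E E)
    (hU : SubMarkovResolvent U) (hUhat : SubMarkovResolvent Uhat)
    (hm : SubInvariantMeasure m U) (hmhat : SubInvariantMeasure m Uhat)
    (hdual : WeakDuality m U Uhat)
    (p : ℝ≥0∞) (u : E → ℝ) (hu : MemLp u p m) :
    UInvariant m U u ↔ UInvariant m Uhat u :=
  uInvariant_iff_dual_uInvariant_general m U Uhat hU hUhat hdual p u hu
end

section
/- The set of all U-invariant functions in L^p(E,m) is a vector lattice with respect to the pointwise (m-a.e.) order: it is a vector subspace closed under taking maxima and minima. -/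
open MeasureTheory ProbabilityTheory Filter
open scoped NNReal ENNReal

/-!
If `u` is invariant, testing the invariance against `1_{u ≤ 0}` gives
`∫_{u ≤ 0} u dU_α(x, ·) = u(x) U_α(x, {u ≤ 0})`, whose left side is `≤ 0`; so from a.e. point
where `u > 0` the kernel does not charge `{u ≤ 0}`, and symmetrically where `u < 0`. Testing
against `1_{u > 0} f` then gives `U_α(u⁺ f) = u⁺ U_α f`, with no integrability needed. Testing
`u⁺` against `1_{u⁺ ≤ n}` and letting `n → ∞` shows that `u⁺`, hence also `u⁻ = (-u)⁺` and `u`,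
is `U_α(x, ·)`-integrable, so invariance is additive, and `max u v = (u - v)⁺ + v`,
`min u v = u - (u - v)⁺`. Sub-invariance of `m` makes `m`-null sets `U_α(x, ·)`-null for
`m`-a.e. `x`, so one may pass to measurable representatives.
-/

section

variable {E : Type*} [MeasurableSpace E] {m : Measure E} {U : ℝ → Kernel E E}

lemma SubMarkovResolvent.isFiniteKernel (hU : SubMarkovResolvent U) {α : ℝ} (hα : 0 < α) :
    IsFiniteKernel (U α) :=
  ⟨⟨ENNReal.ofReal α⁻¹, ENNReal.ofReal_lt_top, hU α hα⟩⟩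

lemma SubInvariantMeasure.ae_ae_of_ae (hm : SubInvariantMeasure m U) {α : ℝ} (hα : 0 < α)
    {p : E → Prop} (hp : ∀ᵐ y ∂m, p y) : ∀ᵐ x ∂m, ∀ᵐ y ∂(U α x), p y := by
  set N := toMeasurable m {y | ¬p y}
  have hN : MeasurableSet N := measurableSet_toMeasurable _ _
  have hmN : m N = 0 := by rw [measure_toMeasurable]; exact hp
  have hint := hm α hα (N.indicator 1) (measurable_one.indicator hN)
  simp only [lintegral_indicator_one hN, hmN, nonpos_iff_eq_zero] at hint
  rw [lintegral_eq_zero_iff ((Kernel.measurable_coe _ hN).const_mul _)] at hint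
  filter_upwards [hint] with x hx
  have hUN : U α x N = 0 := by simpa [not_le.2 hα] using hx
  exact measure_mono_null (subset_toMeasurable _ _) hUN

namespace UInvariant

variable {u v : E → ℝ}

lemma congr_ae_s8 (huI : UInvariant m U u) (hm : SubInvariantMeasure m U) {u' : E → ℝ}
    (h : u =ᵐ[m] u') : UInvariant m U u' := by
  intro α hα f hf hfb
  filter_upwards [huI α hα f hf hfb, hm.ae_ae_of_ae hα h, h] with x hx hUx hux
  have hcongr : Uop U α (fun y => u' y * f y) x = Uop U α (fun y => u y * f y) x :=
    integral_congr_ae (hUx.mono fun y hy => by simp only [hy])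
  rw [hcongr, hx, hux]

lemma const_smul (huI : UInvariant m U u) (c : ℝ) : UInvariant m U (c • u) := by
  intro α hα f hf hfb
  filter_upwards [huI α hα f hf hfb] with x hx
  simp only [Uop, Pi.smul_apply, smul_eq_mul, mul_assoc, integral_const_mul] at hx ⊢
  rw [hx]

lemma neg (huI : UInvariant m U u) : UInvariant m U (-u) := by
  simpa using huI.const_smul (-1)

lemma ae_setIntegral_eq (huI : UInvariant m U u) {α : ℝ} (hα : 0 < α) {s : Set E}
    (hs : MeasurableSet s) : ∀ᵐ x ∂m, ∫ y in s, u y ∂(U α x) = u x * (U α x).real s := by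
  have hbdd : ∃ C, ∀ y, |s.indicator (1 : E → ℝ) y| ≤ C :=
    ⟨1, fun y => by by_cases hy : y ∈ s <;> simp [hy]⟩
  filter_upwards [huI α hα _ (measurable_one.indicator hs) hbdd] with x hx
  simp only [Uop] at hx
  rwa [integral_indicator_one hs,
    show (fun y => u y * s.indicator 1 y) = s.indicator u by
      ext y; by_cases hy : y ∈ s <;> simp [hy], integral_indicator hs] at hx

lemma ae_measure_eq_zero_of_pos (huI : UInvariant m U u) (hU : SubMarkovResolvent U) {α : ℝ}
    (hα : 0 < α) {s : Set E} (hs : MeasurableSet s) (hus : ∀ y ∈ s, u y ≤ 0) :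
    ∀ᵐ x ∂m, 0 < u x → U α x s = 0 := by
  have := hU.isFiniteKernel hα
  filter_upwards [huI.ae_setIntegral_eq hα hs] with x hx hux
  have hnonpos : u x * (U α x).real s ≤ 0 := hx ▸ setIntegral_nonpos hs hus
  have hreal : (U α x).real s = 0 :=
    le_antisymm (nonpos_of_mul_nonpos_right hnonpos hux) measureReal_nonneg
  rwa [measureReal_eq_zero_iff] at hreal

lemma posPart (huI : UInvariant m U u) (hU : SubMarkovResolvent U) (hu : Measurable u) :
    UInvariant m U (fun x => max (u x) 0) := by
  intro α hα f hf hfb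
  have := hU.isFiniteKernel hα
  obtain ⟨C, hC⟩ := hfb
  set P := {y | 0 < u y}
  have hP : MeasurableSet P := measurableSet_lt measurable_const hu
  have hfP : ∃ C, ∀ y, |P.indicator f y| ≤ C :=
    ⟨C, fun y => by by_cases hy : y ∈ P <;> simp [hy, hC y, (abs_nonneg (f y)).trans (hC y)]⟩
  filter_upwards [huI α hα _ (hf.indicator hP) hfP,
    huI.ae_measure_eq_zero_of_pos hU hα (measurableSet_le hu measurable_const) fun y hy => hy,
    huI.neg.ae_measure_eq_zero_of_pos hU hα hP fun y hy => neg_nonpos.2 (le_of_lt hy)]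
    with x hx hpos hneg
  have hlhs : Uop U α (fun y => max (u y) 0 * f y) x = u x * ∫ y in P, f y ∂(U α x) := by
    rw [← integral_indicator hP, ← Uop, ← hx]
    congr 1
    ext y
    by_cases hy : 0 < u y
    · simp [P, hy, max_eq_left hy.le]
    · simp [P, hy, max_eq_right (not_lt.1 hy)]
  rw [hlhs]
  rcases lt_or_ge 0 (u x) with h | h
  · have hUP : ∀ᵐ y ∂(U α x), y ∈ P := ae_iff.2 (by simpa [P] using hpos h)
    rw [max_eq_left h.le, Measure.restrict_eq_self_of_ae_mem hUP]
    rfl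
  · rw [max_eq_right h]
    rcases h.lt_or_eq with h | h
    · rw [setIntegral_measure_zero _ (hneg (neg_pos.2 h)), mul_zero, zero_mul]
    · rw [h, zero_mul, zero_mul]

lemma ae_integrable_of_nonneg (huI : UInvariant m U u) (hU : SubMarkovResolvent U)
    (hu : Measurable u) (hu0 : 0 ≤ u) {α : ℝ} (hα : 0 < α) :
    ∀ᵐ x ∂m, Integrable u (U α x) := by
  have := hU.isFiniteKernel hα
  set A : ℕ → Set E := fun n => {y | u y ≤ n}
  have hA : ∀ n, MeasurableSet (A n) := fun n => measurableSet_le hu measurable_const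
  have hAmono : Monotone A := fun i j hij y (hy : u y ≤ i) => hy.trans (Nat.cast_le.2 hij)
  have hAcover : ⋃ n, A n = Set.univ :=
    Set.eq_univ_of_forall fun y => Set.mem_iUnion.2 (exists_nat_ge (u y))
  filter_upwards [ae_all_iff.2 fun n => huI.ae_setIntegral_eq hα (hA n)] with x hx
  refine ⟨hu.aestronglyMeasurable, (hasFiniteIntegral_iff_ofReal (ae_of_all _ hu0)).2 ?_⟩
  have hbound : ∀ n, ∫⁻ y in A n, ENNReal.ofReal (u y) ∂(U α x)
      ≤ ENNReal.ofReal (u x * (U α x).real Set.univ) := by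
    intro n
    have hint : IntegrableOn u (A n) (U α x) :=
      Measure.integrableOn_of_bounded (M := n) (measure_ne_top _ _) hu.aestronglyMeasurable
        ((ae_restrict_mem (hA n)).mono fun y hy => by
          simpa [A, Real.norm_eq_abs, abs_of_nonneg (hu0 y)] using hy)
    rw [← ofReal_integral_eq_lintegral_ofReal hint (ae_of_all _ fun y => hu0 y), hx n]
    exact ENNReal.ofReal_le_ofReal
      (mul_le_mul_of_nonneg_left (measureReal_mono (Set.subset_univ _)) (hu0 x))
  calc ∫⁻ y, ENNReal.ofReal (u y) ∂(U α x)
      = ⨆ n, ∫⁻ y in A n, ENNReal.ofReal (u y) ∂(U α x) := by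
        rw [← setLIntegral_iUnion_of_directed _ hAmono.directed_le, hAcover, Measure.restrict_univ]
    _ ≤ _ := iSup_le hbound
    _ < ∞ := ENNReal.ofReal_lt_top

lemma ae_integrable (huI : UInvariant m U u) (hU : SubMarkovResolvent U) (hu : Measurable u)
    {α : ℝ} (hα : 0 < α) : ∀ᵐ x ∂m, Integrable u (U α x) := by
  filter_upwards [(huI.posPart hU hu).ae_integrable_of_nonneg hU (hu.max measurable_const)
      (fun y => le_max_right _ _) hα,
    (huI.neg.posPart hU hu.neg).ae_integrable_of_nonneg hU (hu.neg.max measurable_const)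
      (fun y => le_max_right _ _) hα] with x hpos hneg
  exact (hpos.sub hneg).congr (ae_of_all _ fun y => max_zero_sub_max_neg_zero_eq_self (u y))

lemma add (huI : UInvariant m U u) (hvI : UInvariant m U v) (hU : SubMarkovResolvent U)
    (hu : Measurable u) (hv : Measurable v) : UInvariant m U (u + v) := by
  intro α hα f hf hfb
  obtain ⟨C, hC⟩ := hfb
  filter_upwards [huI α hα f hf ⟨C, hC⟩, hvI α hα f hf ⟨C, hC⟩, huI.ae_integrable hU hu hα,
    hvI.ae_integrable hU hv hα] with x hux hvx hui hvi
  have hfC : ∀ᵐ y ∂(U α x), ‖f y‖ ≤ C := ae_of_all _ hC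
  simp only [Uop, Pi.add_apply, add_mul] at hux hvx ⊢
  rw [integral_add (hui.mul_bdd hf.aestronglyMeasurable hfC)
    (hvi.mul_bdd hf.aestronglyMeasurable hfC), hux, hvx]

lemma sub (huI : UInvariant m U u) (hvI : UInvariant m U v) (hU : SubMarkovResolvent U)
    (hu : Measurable u) (hv : Measurable v) : UInvariant m U (u - v) := by
  simpa [sub_eq_add_neg] using huI.add hvI.neg hU hu hv.neg

lemma sup (huI : UInvariant m U u) (hvI : UInvariant m U v) (hU : SubMarkovResolvent U)
    (hu : Measurable u) (hv : Measurable v) : UInvariant m U (u ⊔ v) := by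
  convert ((huI.sub hvI hU hu hv).posPart hU (hu.sub hv)).add hvI hU
    ((hu.sub hv).max measurable_const) hv using 1
  ext x
  rw [Pi.sup_apply, Pi.add_apply, Pi.sub_apply, ← max_add_add_right, sub_add_cancel, zero_add]

lemma inf (huI : UInvariant m U u) (hvI : UInvariant m U v) (hU : SubMarkovResolvent U)
    (hu : Measurable u) (hv : Measurable v) : UInvariant m U (u ⊓ v) := by
  convert huI.sub ((huI.sub hvI hU hu hv).posPart hU (hu.sub hv)) hU hu
    ((hu.sub hv).max measurable_const) using 1
  ext x
  rcases le_total (u x) (v x) with h | h <;> simp [h]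

lemma exists_measurable_ae_eq (huI : UInvariant m U u) (hm : SubInvariantMeasure m U)
    (hu : AEMeasurable u m) : ∃ u', Measurable u' ∧ u =ᵐ[m] u' ∧ UInvariant m U u' :=
  ⟨hu.mk u, hu.measurable_mk, hu.ae_eq_mk, huI.congr_ae_s8 hm hu.ae_eq_mk⟩

end UInvariant

end

theorem uInvariant_vector_lattice_general
    {E : Type*} [MeasurableSpace E] (m : Measure E)
    (U : ℝ → Kernel E E)
    (hU : SubMarkovResolvent U)
    (hm : SubInvariantMeasure m U)
    (p : ℝ≥0∞) (c : ℝ) (u v : E → ℝ)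
    (hu : MemLp u p m) (hv : MemLp v p m)
    (huI : UInvariant m U u) (hvI : UInvariant m U v) :
    (MemLp (u + v) p m ∧ UInvariant m U (u + v)) ∧
    (MemLp (c • u) p m ∧ UInvariant m U (c • u)) ∧
    (MemLp (fun x => max (u x) (v x)) p m ∧ UInvariant m U fun x => max (u x) (v x)) ∧
    (MemLp (fun x => min (u x) (v x)) p m ∧ UInvariant m U fun x => min (u x) (v x)) := by
  obtain ⟨u', hu', huu', hu'I⟩ :=
    huI.exists_measurable_ae_eq hm hu.aestronglyMeasurable.aemeasurable
  obtain ⟨v', hv', hvv', hv'I⟩ :=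
    hvI.exists_measurable_ae_eq hm hv.aestronglyMeasurable.aemeasurable
  refine ⟨⟨hu.add hv, ?_⟩, ⟨hu.const_smul c, huI.const_smul c⟩, ⟨hu.sup hv, ?_⟩,
    ⟨hu.inf hv, ?_⟩⟩
  · exact (hu'I.add hv'I hU hu' hv').congr_ae_s8 hm (huu'.add hvv').symm
  · exact (hu'I.sup hv'I hU hu' hv').congr_ae_s8 hm (huu'.sup hvv').symm
  · exact (hu'I.inf hv'I hU hu' hv').congr_ae_s8 hm (huu'.inf hvv').symm

/-- The set of `U`-invariant functions in `L^p(E,m)` is a vector lattice for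
the pointwise order: it is stable under sums, scalar multiples, pointwise max and min. -/
theorem uInvariant_vector_lattice
    {E : Type*} [MeasurableSpace E] (m : Measure E) [SigmaFinite m]
    (U Uhat : ℝ → Kernel E E)
    (hU : SubMarkovResolvent U) (hUhat : SubMarkovResolvent Uhat)
    (hm : SubInvariantMeasure m U) (hmhat : SubInvariantMeasure m Uhat)
    (hdual : WeakDuality m U Uhat)
    (p : ℝ≥0∞) (c : ℝ) (u v : E → ℝ)
    (hu : MemLp u p m) (hv : MemLp v p m)
    (huI : UInvariant m U u) (hvI : UInvariant m U v) :
    (MemLp (u + v) p m ∧ UInvariant m U (u + v)) ∧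
    (MemLp (c • u) p m ∧ UInvariant m U (c • u)) ∧
    (MemLp (fun x => max (u x) (v x)) p m ∧ UInvariant m U fun x => max (u x) (v x)) ∧
    (MemLp (fun x => min (u x) (v x)) p m ∧ UInvariant m U fun x => min (u x) (v x)) :=
  uInvariant_vector_lattice_general m U hU hm p c u v hu hv huI hvI
end

section
/- Let (P_t) be a Markovian transition semigroup with strongly continuous extension to L^1(E,m), where m is σ-finite and sub-invariant, with generator L_1 and co-generator L̂_1. A probability density ρ ∈ L^1(E,m) gives an invariant probability measure ρ·m for (P_t) if and only if ρ ∈ D(L̂_1) and L̂_1 ρ = 0. -/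
open MeasureTheory ProbabilityTheory Filter Set Topology
open scoped ENNReal

/-! By duality against bounded measurable functions, `ρ • m` is `P_t`-invariant iff
`T_t ρ = ρ`: testing against the sign of `T_t ρ - ρ` recovers its `L¹` norm. The same sign test,
together with `|P_t f| ≤ 1` for `|f| ≤ 1`, makes every `T_t` an `L¹` contraction, so the orbit
`t ↦ T_t ρ` is continuous on `[0, ∞)`, and the semigroup law gives it the right derivative
`T_s (L̂₁ ρ)` at every `s ≥ 0`.
If `L̂₁ ρ = 0`, the mean value inequality makes the orbit constant. -/

namespace MeasureTheory.L1

variable {E : Type*} [MeasurableSpace E] {m : Measure E}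

theorem exists_integral_mul_eq_norm (w : Lp ℝ 1 m) :
    ∃ f : E → ℝ, Measurable f ∧ (∀ x, |f x| ≤ 1) ∧ ∫ x, f x * w x ∂m = ‖w‖ := by
  refine ⟨fun x => if 0 ≤ w x then 1 else -1,
    Measurable.ite (measurableSet_le measurable_const (Lp.stronglyMeasurable w).measurable)
      measurable_const measurable_const, fun x => by dsimp only; split_ifs <;> simp, ?_⟩
  rw [L1.norm_eq_integral_norm]
  congr 1 with x
  dsimp only
  split_ifs with h
  · rw [one_mul, Real.norm_of_nonneg h]
  · rw [neg_one_mul, Real.norm_of_nonpos (not_le.mp h).le]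

theorem integrable_mul_of_abs_le_one {f : E → ℝ} (hf : Measurable f) (hf1 : ∀ x, |f x| ≤ 1)
    (g : Lp ℝ 1 m) : Integrable (fun x => f x * g x) m :=
  (L1.integrable_coeFn g).bdd_mul hf.aestronglyMeasurable (Eventually.of_forall hf1)

theorem eq_of_forall_integral_mul_eq {u v : Lp ℝ 1 m}
    (h : ∀ f : E → ℝ, Measurable f → (∀ x, |f x| ≤ 1) →
      ∫ x, f x * u x ∂m = ∫ x, f x * v x ∂m) :
    u = v := by
  obtain ⟨f, hf, hf1, hfuv⟩ := exists_integral_mul_eq_norm (u - v)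
  have : ∫ x, f x * (u - v : Lp ℝ 1 m) x ∂m = ∫ x, f x * u x - f x * v x ∂m :=
    integral_congr_ae <| by
      filter_upwards [Lp.coeFn_sub u v] with x hx
      rw [hx, Pi.sub_apply, mul_sub]
  rw [← sub_eq_zero, ← norm_eq_zero, ← hfuv, this,
    MeasureTheory.integral_sub (integrable_mul_of_abs_le_one hf hf1 u)
      (integrable_mul_of_abs_le_one hf hf1 v), h f hf hf1, sub_self]

variable {κ : Kernel E E} {S : Lp ℝ 1 m → Lp ℝ 1 m}

theorem norm_apply_le_of_integral_kernel_mul_eq [IsMarkovKernel κ]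
    (hS : ∀ f : E → ℝ, Measurable f → (∃ C, ∀ x, |f x| ≤ C) →
      ∀ g : Lp ℝ 1 m, ∫ x, (∫ y, f y ∂κ x) * g x ∂m = ∫ x, f x * S g x ∂m)
    (g : Lp ℝ 1 m) : ‖S g‖ ≤ ‖g‖ := by
  obtain ⟨f, hf, hf1, hfSg⟩ := exists_integral_mul_eq_norm (S g)
  have hκf : ∀ x, ‖∫ y, f y ∂κ x‖ ≤ 1 := fun x => by
    simpa using norm_integral_le_of_norm_le_const (μ := κ x)
      (Eventually.of_forall fun y => (Real.norm_eq_abs _).trans_le (hf1 y))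
  calc ‖S g‖ = ∫ x, (∫ y, f y ∂κ x) * g x ∂m := by rw [← hfSg, hS f hf ⟨1, hf1⟩]
    _ ≤ ∫ x, ‖(∫ y, f y ∂κ x) * g x‖ ∂m := (Real.le_norm_self _).trans
      (norm_integral_le_integral_norm _)
    _ ≤ ∫ x, ‖g x‖ ∂m := integral_mono_of_nonneg
        (Eventually.of_forall fun _ => norm_nonneg _) (L1.integrable_coeFn g).norm
        (Eventually.of_forall fun x =>
          (norm_mul _ _).trans_le (mul_le_of_le_one_left (norm_nonneg _) (hκf x)))
    _ = ‖g‖ := (L1.norm_eq_integral_norm g).symm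

theorem integral_kernel_mul_eq_iff
    (hS : ∀ f : E → ℝ, Measurable f → (∃ C, ∀ x, |f x| ≤ C) →
      ∀ g : Lp ℝ 1 m, ∫ x, (∫ y, f y ∂κ x) * g x ∂m = ∫ x, f x * S g x ∂m)
    (ρ : Lp ℝ 1 m) :
    (∀ f : E → ℝ, Measurable f → (∃ C, ∀ x, |f x| ≤ C) →
      ∫ x, (∫ y, f y ∂κ x) * ρ x ∂m = ∫ x, f x * ρ x ∂m) ↔ S ρ = ρ := by
  refine ⟨fun hinv => eq_of_forall_integral_mul_eq fun f hf hf1 => ?_, fun hfix f hf hfC => ?_⟩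
  · rw [← hS f hf ⟨1, hf1⟩, hinv f hf ⟨1, hf1⟩]
  · rw [hS f hf hfC, hfix]

end MeasureTheory.L1

namespace ContractionSemigroup

variable {F : Type*} [NormedAddCommGroup F] [NormedSpace ℝ F] {T : ℝ → F →L[ℝ] F}

theorem dist_apply_le_dist_apply_sub
    (hsemi : ∀ s ≥ (0:ℝ), ∀ t ≥ (0:ℝ), T (s + t) = (T s).comp (T t))
    (hcontr : ∀ t ≥ (0:ℝ), ∀ v, ‖T t v‖ ≤ ‖v‖) (x : F) {s t : ℝ} (hs : 0 ≤ s)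
    (hst : s ≤ t) :
    dist (T t x) (T s x) ≤ dist (T (t - s) x) x := by
  have : T t x - T s x = T s (T (t - s) x - x) := by
    rw [map_sub, ← ContinuousLinearMap.comp_apply, ← hsemi s hs _ (sub_nonneg.2 hst),
      add_sub_cancel]
  rw [dist_eq_norm, dist_eq_norm, this]
  exact hcontr s hs _

theorem dist_apply_le_dist_apply_abs_sub
    (hsemi : ∀ s ≥ (0:ℝ), ∀ t ≥ (0:ℝ), T (s + t) = (T s).comp (T t))
    (hcontr : ∀ t ≥ (0:ℝ), ∀ v, ‖T t v‖ ≤ ‖v‖) (x : F) {s t : ℝ} (hs : 0 ≤ s)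
    (ht : 0 ≤ t) :
    dist (T t x) (T s x) ≤ dist (T |t - s| x) x := by
  rcases le_total s t with hst | hts
  · rw [abs_of_nonneg (sub_nonneg.2 hst)]
    exact dist_apply_le_dist_apply_sub hsemi hcontr x hs hst
  · rw [abs_sub_comm, abs_of_nonneg (sub_nonneg.2 hts), dist_comm]
    exact dist_apply_le_dist_apply_sub hsemi hcontr x ht hts

theorem continuousOn_apply_of_tendsto_nhdsGE
    (hsemi : ∀ s ≥ (0:ℝ), ∀ t ≥ (0:ℝ), T (s + t) = (T s).comp (T t))
    (hcontr : ∀ t ≥ (0:ℝ), ∀ v, ‖T t v‖ ≤ ‖v‖) {x : F}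
    (hx : Tendsto (fun t => T t x) (𝓝[≥] 0) (𝓝 x)) :
    ContinuousOn (fun t => T t x) (Ici 0) := by
  intro s hs
  have habs : Tendsto (fun t => |t - s|) (𝓝[Ici 0] s) (𝓝[≥] 0) :=
    tendsto_nhdsWithin_iff.2
      ⟨((continuous_abs.comp (continuous_sub_right s)).tendsto' s 0 (by simp)).mono_left
        nhdsWithin_le_nhds, Eventually.of_forall fun t => mem_Ici.2 (abs_nonneg _)⟩
  rw [ContinuousWithinAt, tendsto_iff_dist_tendsto_zero]
  refine squeeze_zero' (Eventually.of_forall fun _ => dist_nonneg)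
    (eventually_nhdsWithin_of_forall fun t ht =>
      dist_apply_le_dist_apply_abs_sub hsemi hcontr x hs ht)
    ((tendsto_iff_dist_tendsto_zero.1 hx).comp habs)

theorem hasDerivWithinAt_apply_of_tendsto_slope
    (hsemi : ∀ s ≥ (0:ℝ), ∀ t ≥ (0:ℝ), T (s + t) = (T s).comp (T t)) {x y : F}
    (hxy : Tendsto (fun t => t⁻¹ • (T t x - x)) (𝓝[>] 0) (𝓝 y)) {s : ℝ} (hs : 0 ≤ s) :
    HasDerivWithinAt (fun t => T t x) (T s y) (Ici s) s := by
  have hshift : Tendsto (· - s) (𝓝[>] s) (𝓝[>] 0) :=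
    tendsto_nhdsWithin_iff.2
      ⟨((continuous_sub_right s).tendsto' s 0 (sub_self s)).mono_left nhdsWithin_le_nhds,
        eventually_nhdsWithin_of_forall fun t ht => mem_Ioi.2 (sub_pos.2 ht)⟩
  rw [← hasDerivWithinAt_Ioi_iff_Ici,
    hasDerivWithinAt_iff_tendsto_slope' self_notMem_Ioi]
  refine (((T s).continuous.tendsto y).comp (hxy.comp hshift)).congr' ?_
  filter_upwards [self_mem_nhdsWithin] with t (ht : s < t)
  rw [Function.comp_apply, Function.comp_apply, map_smul, map_sub,
    ← ContinuousLinearMap.comp_apply, ← hsemi s hs _ (sub_pos.2 ht).le, add_sub_cancel,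
    slope_def_module]

theorem forall_apply_eq_self_iff_tendsto_slope (h0 : T 0 = ContinuousLinearMap.id ℝ F)
    (hsemi : ∀ s ≥ (0:ℝ), ∀ t ≥ (0:ℝ), T (s + t) = (T s).comp (T t))
    (hcontr : ∀ t ≥ (0:ℝ), ∀ v, ‖T t v‖ ≤ ‖v‖) {x : F}
    (hx : Tendsto (fun t => T t x) (𝓝[≥] 0) (𝓝 x)) :
    (∀ t ≥ (0:ℝ), T t x = x) ↔
      Tendsto (fun t => t⁻¹ • (T t x - x)) (𝓝[>] 0) (𝓝 0) := by
  refine ⟨fun hfix => tendsto_const_nhds.congr' ?_, fun hgen t ht => ?_⟩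
  · filter_upwards [self_mem_nhdsWithin] with t (ht : 0 < t)
    rw [hfix t ht.le, sub_self, smul_zero]
  · have hderiv : ∀ s ∈ Ico 0 t, HasDerivWithinAt (fun t => T t x) 0 (Ici s) s :=
      fun s hs => by simpa using hasDerivWithinAt_apply_of_tendsto_slope hsemi hgen hs.1
    simpa [h0] using constant_of_has_deriv_right_zero
      ((continuousOn_apply_of_tendsto_nhdsGE hsemi hcontr hx).mono Icc_subset_Ici_self)
      hderiv t ⟨ht, le_rfl⟩

end ContractionSemigroup

theorem invariant_density_iff_coharmonic_general
    {E : Type*} [MeasurableSpace E] (m : Measure E)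
    (κ : ℝ → Kernel E E) [∀ t, IsMarkovKernel (κ t)]
    (T : ℝ → (Lp ℝ 1 m →L[ℝ] Lp ℝ 1 m))
    (hT0 : T 0 = ContinuousLinearMap.id ℝ (Lp ℝ 1 m))
    (hTsemi : ∀ s ≥ (0:ℝ), ∀ t ≥ (0:ℝ), T (s + t) = (T s).comp (T t))
    (hTsc : ∀ g : Lp ℝ 1 m,
      Tendsto (fun t => T t g) (nhdsWithin 0 (Set.Ici (0:ℝ))) (nhds g))
    (hdual : ∀ t ≥ (0:ℝ), ∀ f : E → ℝ, Measurable f → (∃ C, ∀ x, |f x| ≤ C) →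
      ∀ g : Lp ℝ 1 m, ∫ x, (∫ y, f y ∂(κ t x)) * g x ∂m = ∫ x, f x * (T t g) x ∂m)
    (ρ : Lp ℝ 1 m) :
    (∀ t ≥ (0:ℝ), ∀ f : E → ℝ, Measurable f → (∃ C, ∀ x, |f x| ≤ C) →
        ∫ x, (∫ y, f y ∂(κ t x)) * ρ x ∂m = ∫ x, f x * ρ x ∂m) ↔
      Tendsto (fun t : ℝ => t⁻¹ • (T t ρ - ρ)) (nhdsWithin 0 (Set.Ioi (0:ℝ))) (nhds 0) := by
  have hcontr : ∀ t ≥ (0:ℝ), ∀ g, ‖T t g‖ ≤ ‖g‖ := fun t ht =>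
    L1.norm_apply_le_of_integral_kernel_mul_eq (hdual t ht)
  rw [← ContractionSemigroup.forall_apply_eq_self_iff_tendsto_slope hT0 hTsemi hcontr (hTsc ρ)]
  exact forall₂_congr fun t ht => L1.integral_kernel_mul_eq_iff (hdual t ht) ρ

/-- Let `(P_t)` be a Markovian transition semigroup (given by Markov kernels
`κ t`) with σ-finite sub-invariant measure `m`, and let `(T_t)` be the dual semigroup on
`L¹(m)` (`∫ (P_t f) g dm = ∫ f (T_t g) dm`), strongly continuous, with generator `L̂₁`.
A probability density `ρ ∈ L¹(m)` gives an invariant probability measure `ρ·m` for `(P_t)`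
iff `ρ ∈ D(L̂₁)` and `L̂₁ ρ = 0`, i.e. `t⁻¹(T_t ρ − ρ) → 0` strongly as `t → 0⁺`. -/
theorem invariant_density_iff_coharmonic
    {E : Type*} [MeasurableSpace E] (m : Measure E) [SigmaFinite m]
    (κ : ℝ → Kernel E E) [∀ t, IsMarkovKernel (κ t)]
    (hκ0 : κ 0 = Kernel.id)
    (hκsemi : ∀ s ≥ (0:ℝ), ∀ t ≥ (0:ℝ), κ (s + t) = (κ s).comp (κ t))
    (hsub : ∀ t ≥ (0:ℝ), ∀ f : E → ℝ≥0∞, Measurable f →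
      ∫⁻ x, ∫⁻ y, f y ∂(κ t x) ∂m ≤ ∫⁻ x, f x ∂m)
    (T : ℝ → (Lp ℝ 1 m →L[ℝ] Lp ℝ 1 m))
    (hT0 : T 0 = ContinuousLinearMap.id ℝ (Lp ℝ 1 m))
    (hTsemi : ∀ s ≥ (0:ℝ), ∀ t ≥ (0:ℝ), T (s + t) = (T s).comp (T t))
    (hTsc : ∀ g : Lp ℝ 1 m,
      Tendsto (fun t => T t g) (nhdsWithin 0 (Set.Ici (0:ℝ))) (nhds g))
    (hdual : ∀ t ≥ (0:ℝ), ∀ f : E → ℝ, Measurable f → (∃ C, ∀ x, |f x| ≤ C) →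
      ∀ g : Lp ℝ 1 m, ∫ x, (∫ y, f y ∂(κ t x)) * g x ∂m = ∫ x, f x * (T t g) x ∂m)
    (ρ : Lp ℝ 1 m) (hρ0 : 0 ≤ᵐ[m] (ρ : E → ℝ)) (hρ1 : ∫ x, ρ x ∂m = 1) :
    (∀ t ≥ (0:ℝ), ∀ f : E → ℝ, Measurable f → (∃ C, ∀ x, |f x| ≤ C) →
        ∫ x, (∫ y, f y ∂(κ t x)) * ρ x ∂m = ∫ x, f x * ρ x ∂m) ↔
      Tendsto (fun t : ℝ => t⁻¹ • (T t ρ - ρ)) (nhdsWithin 0 (Set.Ioi (0:ℝ))) (nhds 0) :=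
  invariant_density_iff_coharmonic_general m κ T hT0 hTsemi hTsc hdual ρ
end

section
/- Under the hypotheses that m is a σ-finite sub-invariant measure for a Markovian semigroup (P_t) (with P_t 1 = 1 m-a.e.), there exists a nonzero invariant probability measure for (P_t) absolutely continuous with respect to m if and only if there exists a nonzero ρ ∈ D(L_1) with L_1 ρ = 0. -/
/-!
Write `P f x = ∫ f dκₜ(x)`. For a bounded `g ≥ 0` in `L¹(m)`, expanding the square and using
`∫ P(g²) dm ≤ ∫ g² dm` gives `∫∫ (g y - g x)² κₜ(x, dy) m(dx) ≤ 2 (∫ g² dm - ∫ g · P g dm)`.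
The right side vanishes both when `P g = g` and when `g • m` is invariant, and then `g` is
`κₜ(x, ·)`-a.e. equal to `g x`, which in turn gives both properties: for bounded densities,
harmonicity and invariance of `g • m` coincide.

If `μ = h • m` is invariant, `(min h 1 • m) κₜ` lies below `(h • m) κₜ = h • m` and below
`m κₜ ≤ m`, hence below `min h 1 • m`; having the same mass, it is equal to it. So `min h 1` is
harmonic, a nonzero fixed point of every `S t`. Conversely, `S t` is an `L¹` contraction, so
`‖S t ρ - ρ‖ ≤ n ‖S (t/n) ρ - ρ‖ = t ‖(t/n)⁻¹ • (S (t/n) ρ - ρ)‖ → 0` when `L₁ ρ = 0`. Then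
`|ρ| = |P ρ| ≤ P |ρ|` and the integrals agree, so `|ρ|` is harmonic; so are `(|ρ| - 1)⁺`, by the
same argument, and `min |ρ| 1`, and `min |ρ| 1 • m` is invariant.
-/

open MeasureTheory ProbabilityTheory Filter Topology
open scoped NNReal ENNReal

lemma ENNReal.tsub_sq_add_tsub_sq_add_two_mul {a b : ℝ≥0∞} (ha : a ≠ ∞) (hb : b ≠ ∞) :
    (a - b) ^ 2 + (b - a) ^ 2 + 2 * a * b = a ^ 2 + b ^ 2 := by
  rcases le_total a b with hab | hab
  · obtain ⟨c, rfl⟩ := exists_add_of_le hab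
    rw [tsub_eq_zero_of_le hab, ENNReal.add_sub_cancel_left ha]
    ring
  · obtain ⟨c, rfl⟩ := exists_add_of_le hab
    rw [tsub_eq_zero_of_le hab, ENNReal.add_sub_cancel_left hb]
    ring

namespace MeasureTheory.Measure

variable {α : Type*} [MeasurableSpace α]

lemma comp_mono {β : Type*} [MeasurableSpace β] {μ ν : Measure α} (κ : Kernel α β) (h : μ ≤ ν) :
    κ ∘ₘ μ ≤ κ ∘ₘ ν :=
  le_intro fun s hs _ => by
    rw [bind_apply hs κ.aemeasurable, bind_apply hs κ.aemeasurable]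
    exact lintegral_mono' h le_rfl

lemma comp_eq_of_comp_le {ν : Measure α} [IsFiniteMeasure ν] {κ : Kernel α α} [IsMarkovKernel κ]
    (h : κ ∘ₘ ν ≤ ν) : κ ∘ₘ ν = ν :=
  eq_of_le_of_measure_univ_eq h comp_apply_univ

lemma le_withDensity_min {μ ν : Measure α} {f g : α → ℝ≥0∞} (hf : Measurable f)
    (hg : Measurable g) (hνf : ν ≤ μ.withDensity f) (hνg : ν ≤ μ.withDensity g) :
    ν ≤ μ.withDensity fun x => min (f x) (g x) := by
  refine le_intro fun s hs _ => ?_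
  set H := {x | f x ≤ g x}
  have hH : MeasurableSet H := measurableSet_le hf hg
  rw [← measure_inter_add_sdiff s hH, ← measure_inter_add_sdiff (μ := μ.withDensity _) s hH,
    withDensity_apply _ (hs.inter hH), withDensity_apply _ (hs.diff hH)]
  gcongr
  · calc ν (s ∩ H) ≤ μ.withDensity f (s ∩ H) := hνf _
      _ = ∫⁻ x in s ∩ H, min (f x) (g x) ∂μ := by
        rw [withDensity_apply _ (hs.inter hH)]
        exact setLIntegral_congr_fun (hs.inter hH) fun x hx => (min_eq_left hx.2).symm
  · calc ν (s \ H) ≤ μ.withDensity g (s \ H) := hνg _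
      _ = ∫⁻ x in s \ H, min (f x) (g x) ∂μ := by
        rw [withDensity_apply _ (hs.diff hH)]
        exact setLIntegral_congr_fun (hs.diff hH) fun x hx =>
          (min_eq_right (not_le.mp hx.2).le).symm

end MeasureTheory.Measure

namespace ProbabilityTheory.Kernel

variable {E : Type*} [MeasurableSpace E] {m : Measure E} {K : Kernel E E}

def IsHarmonic (K : Kernel E E) (m : Measure E) (g : E → ℝ≥0∞) : Prop :=
  (fun x => ∫⁻ y, g y ∂K x) =ᵐ[m] g

lemma comp_le_of_lintegral_le
    (h : ∀ f : E → ℝ≥0∞, Measurable f → ∫⁻ x, ∫⁻ y, f y ∂K x ∂m ≤ ∫⁻ x, f x ∂m) :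
    K ∘ₘ m ≤ m :=
  Measure.le_intro fun s hs _ => by
    simpa [Measure.bind_apply hs K.aemeasurable, lintegral_indicator_one hs]
      using h _ (measurable_one.indicator hs)

lemma comp_eq_iff_lintegral {μ : Measure E} :
    K ∘ₘ μ = μ ↔ ∀ f : E → ℝ≥0∞, Measurable f → ∫⁻ x, ∫⁻ y, f y ∂K x ∂μ = ∫⁻ x, f x ∂μ := by
  refine ⟨fun h f hf => ?_, fun h => Measure.ext_of_lintegral μ fun f hf => ?_⟩
  · rw [← Measure.lintegral_bind K.aemeasurable hf.aemeasurable, h]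
  · rw [Measure.lintegral_bind K.aemeasurable hf.aemeasurable, h f hf]

lemma lintegral_lintegral_le_of_comp_le (hm : K ∘ₘ m ≤ m) {f : E → ℝ≥0∞}
    (hf : AEMeasurable f m) : ∫⁻ x, ∫⁻ y, f y ∂K x ∂m ≤ ∫⁻ x, f x ∂m := by
  rw [← Measure.lintegral_bind K.aemeasurable
    (hf.mono_ac (Measure.absolutelyContinuous_of_le hm))]
  exact lintegral_mono' hm le_rfl

lemma integral_ae_eq_of_ae_eq (hm : K ∘ₘ m ≤ m) {F : Type*} [NormedAddCommGroup F]
    [NormedSpace ℝ F] {f g : E → F} (hfg : f =ᵐ[m] g) :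
    (fun x => ∫ y, f y ∂K x) =ᵐ[m] fun x => ∫ y, g y ∂K x :=
  (Measure.ae_ae_of_ae_comp (Measure.absolutelyContinuous_of_le hm hfg)).mono
    fun _ hx => integral_congr_ae hx

lemma isHarmonic_of_ae_le (hm : K ∘ₘ m ≤ m) {u : E → ℝ≥0∞} (hu : Measurable u)
    (hu_fin : ∫⁻ x, u x ∂m ≠ ∞) (hle : u ≤ᵐ[m] fun x => ∫⁻ y, u y ∂K x) : IsHarmonic K m u :=
  (ae_eq_of_ae_le_of_lintegral_le hle hu_fin hu.lintegral_kernel.aemeasurable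
    (lintegral_lintegral_le_of_comp_le hm hu.aemeasurable)).symm

lemma isHarmonic_enorm (hm : K ∘ₘ m ≤ m) {F : Type*} [NormedAddCommGroup F] [NormedSpace ℝ F]
    {ρ : E → F} (hρ : StronglyMeasurable ρ) (hρ_int : Integrable ρ m)
    (hfix : (fun x => ∫ y, ρ y ∂K x) =ᵐ[m] ρ) : IsHarmonic K m fun x => ‖ρ x‖ₑ :=
  isHarmonic_of_ae_le hm hρ.enorm hρ_int.2.ne <| by
    filter_upwards [hfix] with x hx
    exact hx ▸ enorm_integral_le_lintegral_enorm _

lemma IsHarmonic.integral_toReal_ae_eq {g : E → ℝ≥0∞} (hg : Measurable g)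
    (hg_fin : ∀ x, g x ≠ ∞) (hharm : IsHarmonic K m g) :
    (fun x => ∫ y, (g y).toReal ∂K x) =ᵐ[m] fun x => (g x).toReal := by
  filter_upwards [hharm] with x hx
  rw [integral_toReal hg.aemeasurable (ae_of_all _ fun y => (hg_fin y).lt_top), hx]

variable [IsMarkovKernel K]

lemma IsHarmonic.min_const (hm : K ∘ₘ m ≤ m) {h : E → ℝ≥0∞} (hh : Measurable h)
    (hh_fin : ∫⁻ x, h x ∂m ≠ ∞) (hharm : IsHarmonic K m h) (c : ℝ≥0∞) :
    IsHarmonic K m fun x => min (h x) c := by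
  have hexcess : Measurable fun x => h x - c := hh.sub measurable_const
  have hexcess_fin : ∫⁻ x, h x - c ∂m ≠ ∞ :=
    ne_top_of_le_ne_top hh_fin (lintegral_mono fun _ => tsub_le_self)
  have hexcess_harm : IsHarmonic K m fun x => h x - c := by
    refine isHarmonic_of_ae_le hm hexcess hexcess_fin ?_
    filter_upwards [hharm] with x hx
    calc h x - c = (∫⁻ y, h y ∂K x) - ∫⁻ _, c ∂K x := by simp [hx]
      _ ≤ ∫⁻ y, h y - c ∂K x := lintegral_sub_le _ _ measurable_const
  filter_upwards [hharm, hexcess_harm, ae_lt_top hexcess hexcess_fin] with x hx hx_excess hx_fin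
  rw [← lintegral_congr fun y => tsub_add_min (a := h y) (b := c),
    lintegral_add_left hexcess, hx_excess] at hx
  exact (ENNReal.add_right_inj hx_fin.ne).mp (hx.trans tsub_add_min.symm)

theorem ae_ae_eq_of_lintegral_mul_eq (hm : K ∘ₘ m ≤ m) {g : E → ℝ≥0∞}
    (hg : Measurable g) (hg_fin : ∀ x, g x ≠ ∞) (hg2 : ∫⁻ x, g x ^ 2 ∂m ≠ ∞)
    (h : ∫⁻ x, g x * ∫⁻ y, g y ∂K x ∂m = ∫⁻ x, g x ^ 2 ∂m) :
    ∀ᵐ x ∂m, ∀ᵐ y ∂K x, g y = g x := by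
  -- `(a - b) ^ 2 + (b - a) ^ 2 = |a - b| ^ 2`, as one of the truncated differences is `0`
  set F : E × E → ℝ≥0∞ := fun p => (g p.1 - g p.2) ^ 2 + (g p.2 - g p.1) ^ 2
  have hF : Measurable F := by fun_prop
  have hF_left : ∀ x, Measurable fun y => F (x, y) := fun x => hF.comp measurable_prodMk_left
  have hvar : ∀ x, ∫⁻ y, F (x, y) ∂K x + 2 * (g x * ∫⁻ y, g y ∂K x)
      = g x ^ 2 + ∫⁻ y, g y ^ 2 ∂K x := fun x => by
    rw [← lintegral_const_mul _ hg, ← lintegral_const_mul _ (by fun_prop),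
      ← lintegral_add_left (hF_left x)]
    simp only [F, ← mul_assoc]
    rw [lintegral_congr fun y => ENNReal.tsub_sq_add_tsub_sq_add_two_mul (hg_fin x) (hg_fin y),
      lintegral_add_left measurable_const, MeasureTheory.lintegral_const, measure_univ, mul_one]
  have hsum : ∫⁻ x, ∫⁻ y, F (x, y) ∂K x ∂m + 2 * ∫⁻ x, g x ^ 2 ∂m
      ≤ 0 + 2 * ∫⁻ x, g x ^ 2 ∂m :=
    calc ∫⁻ x, ∫⁻ y, F (x, y) ∂K x ∂m + 2 * ∫⁻ x, g x ^ 2 ∂m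
        = ∫⁻ x, g x ^ 2 + ∫⁻ y, g y ^ 2 ∂K x ∂m := by
          rw [← h, ← lintegral_const_mul _ (by fun_prop),
            ← lintegral_add_left hF.lintegral_kernel_prod_right']
          simp only [hvar]
      _ ≤ ∫⁻ x, g x ^ 2 ∂m + ∫⁻ x, g x ^ 2 ∂m := by
          rw [lintegral_add_left (hg.pow_const 2)]
          exact add_le_add_right
            (lintegral_lintegral_le_of_comp_le hm (hg.pow_const 2).aemeasurable) _
      _ = 0 + 2 * ∫⁻ x, g x ^ 2 ∂m := by ring
  have hdev : ∫⁻ x, ∫⁻ y, F (x, y) ∂K x ∂m = 0 :=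
    nonpos_iff_eq_zero.mp
      (ENNReal.le_of_add_le_add_right (ENNReal.mul_ne_top (by simp) hg2) hsum)
  filter_upwards [(lintegral_eq_zero_iff hF.lintegral_kernel_prod_right').mp hdev] with x hx
  filter_upwards [(lintegral_eq_zero_iff (hF_left x)).mp hx] with y hy
  simp only [F, Pi.zero_apply, add_eq_zero, pow_eq_zero_iff two_ne_zero,
    tsub_eq_zero_iff_le] at hy
  exact le_antisymm hy.2 hy.1

lemma isHarmonic_of_ae_ae_eq {g : E → ℝ≥0∞} (h : ∀ᵐ x ∂m, ∀ᵐ y ∂K x, g y = g x) :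
    IsHarmonic K m g := by
  filter_upwards [h] with x hx
  simp [lintegral_congr_ae hx]

lemma comp_withDensity_eq_of_ae_ae_eq (hm : K ∘ₘ m ≤ m) {g : E → ℝ≥0∞} (hg : Measurable g)
    (hg_fin : ∫⁻ x, g x ∂m ≠ ∞) (h : ∀ᵐ x ∂m, ∀ᵐ y ∂K x, g y = g x) :
    K ∘ₘ m.withDensity g = m.withDensity g := by
  have := isFiniteMeasure_withDensity hg_fin
  refine Measure.comp_eq_of_comp_le (Measure.le_intro fun s hs _ => ?_)
  calc (K ∘ₘ m.withDensity g) s = ∫⁻ x, g x * K x s ∂m := by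
        rw [Measure.bind_apply hs K.aemeasurable,
          lintegral_withDensity_eq_lintegral_mul _ hg (K.measurable_coe hs)]
        rfl
    _ = ∫⁻ x, ∫⁻ y, s.indicator g y ∂K x ∂m := by
        refine lintegral_congr_ae ?_
        filter_upwards [h] with x hx
        rw [← lintegral_indicator_const hs, lintegral_congr_ae]
        filter_upwards [hx] with y hy
        simp only [Set.indicator, hy]
    _ ≤ ∫⁻ x, s.indicator g x ∂m :=
        lintegral_lintegral_le_of_comp_le hm (hg.indicator hs).aemeasurable
    _ = m.withDensity g s := by rw [lintegral_indicator hs, withDensity_apply _ hs]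

lemma IsHarmonic.ae_ae_eq (hm : K ∘ₘ m ≤ m) {g : E → ℝ≥0∞} (hg : Measurable g)
    (hg_fin : ∀ x, g x ≠ ∞) (hg2 : ∫⁻ x, g x ^ 2 ∂m ≠ ∞) (hharm : IsHarmonic K m g) :
    ∀ᵐ x ∂m, ∀ᵐ y ∂K x, g y = g x := by
  refine ae_ae_eq_of_lintegral_mul_eq hm hg hg_fin hg2 (lintegral_congr_ae ?_)
  filter_upwards [hharm] with x hx
  rw [hx, sq]

lemma ae_ae_eq_of_comp_withDensity_eq (hm : K ∘ₘ m ≤ m) {g : E → ℝ≥0∞} (hg : Measurable g)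
    (hg_fin : ∀ x, g x ≠ ∞) (hg2 : ∫⁻ x, g x ^ 2 ∂m ≠ ∞)
    (hinv : K ∘ₘ m.withDensity g = m.withDensity g) : ∀ᵐ x ∂m, ∀ᵐ y ∂K x, g y = g x := by
  refine ae_ae_eq_of_lintegral_mul_eq hm hg hg_fin hg2 ?_
  calc ∫⁻ x, g x * ∫⁻ y, g y ∂K x ∂m = ∫⁻ x, ∫⁻ y, g y ∂K x ∂m.withDensity g :=
        (lintegral_withDensity_eq_lintegral_mul _ hg hg.lintegral_kernel).symm
    _ = ∫⁻ x, g x ∂m.withDensity g := by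
        rw [← Measure.lintegral_bind K.aemeasurable hg.aemeasurable, hinv]
    _ = ∫⁻ x, g x ^ 2 ∂m := by
        rw [lintegral_withDensity_eq_lintegral_mul _ hg hg]
        simp [sq]

theorem isHarmonic_iff_comp_withDensity_eq (hm : K ∘ₘ m ≤ m) {g : E → ℝ≥0∞}
    (hg : Measurable g) (hg_fin : ∀ x, g x ≠ ∞) (hg1 : ∫⁻ x, g x ∂m ≠ ∞)
    (hg2 : ∫⁻ x, g x ^ 2 ∂m ≠ ∞) :
    IsHarmonic K m g ↔ K ∘ₘ m.withDensity g = m.withDensity g :=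
  ⟨fun h => comp_withDensity_eq_of_ae_ae_eq hm hg hg1 (h.ae_ae_eq hm hg hg_fin hg2),
    fun h => isHarmonic_of_ae_ae_eq (ae_ae_eq_of_comp_withDensity_eq hm hg hg_fin hg2 h)⟩

theorem isHarmonic_min_one_iff (hm : K ∘ₘ m ≤ m) {h : E → ℝ≥0∞} (hh : Measurable h)
    (hh_fin : ∫⁻ x, h x ∂m ≠ ∞) :
    IsHarmonic K m (fun x => min (h x) 1) ↔
      K ∘ₘ m.withDensity (fun x => min (h x) 1) = m.withDensity (fun x => min (h x) 1) := by
  have hg1 : ∫⁻ x, min (h x) 1 ∂m ≠ ∞ :=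
    ne_top_of_le_ne_top hh_fin (lintegral_mono fun x => min_le_left _ _)
  refine isHarmonic_iff_comp_withDensity_eq hm (by fun_prop)
    (fun x => ne_top_of_le_ne_top ENNReal.one_ne_top (min_le_right _ _)) hg1
    (ne_top_of_le_ne_top hg1 (lintegral_mono fun x => ?_))
  exact pow_le_of_le_one zero_le (min_le_right _ _) two_ne_zero

lemma comp_withDensity_min_eq (hm : K ∘ₘ m ≤ m) {h : E → ℝ≥0∞} (hh : Measurable h)
    (hh_fin : ∫⁻ x, h x ∂m ≠ ∞) (hinv : K ∘ₘ m.withDensity h = m.withDensity h) (c : ℝ≥0∞) :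
    K ∘ₘ m.withDensity (fun x => min (h x) c) = m.withDensity (fun x => min (h x) c) := by
  have := isFiniteMeasure_withDensity
    (ne_top_of_le_ne_top hh_fin (lintegral_mono fun x => min_le_left (h x) c))
  refine Measure.comp_eq_of_comp_le (Measure.le_withDensity_min hh measurable_const ?_ ?_)
  · rw [← hinv]
    exact Measure.comp_mono K (withDensity_mono (ae_of_all _ fun x => min_le_left _ _))
  · calc K ∘ₘ m.withDensity (fun x => min (h x) c) ≤ K ∘ₘ (c • m) := by
          rw [← withDensity_const]
          exact Measure.comp_mono K (withDensity_mono (ae_of_all _ fun x => min_le_right _ _))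
      _ ≤ m.withDensity fun _ => c := by
          rw [Measure.comp_smul, withDensity_const]
          exact smul_le_smul_left c hm

theorem isHarmonic_min_rnDeriv_one [SigmaFinite m] (hm : K ∘ₘ m ≤ m) {μ : Measure E}
    [IsFiniteMeasure μ] (hμm : μ ≪ m) (hinv : K ∘ₘ μ = μ) :
    IsHarmonic K m fun x => min (μ.rnDeriv m x) 1 := by
  have hfin : ∫⁻ x, μ.rnDeriv m x ∂m ≠ ∞ := by
    rw [Measure.lintegral_rnDeriv hμm]
    exact measure_ne_top μ _
  refine (isHarmonic_min_one_iff hm (μ.measurable_rnDeriv m) hfin).mpr ?_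
  refine comp_withDensity_min_eq hm (μ.measurable_rnDeriv m) hfin ?_ 1
  rwa [Measure.withDensity_rnDeriv_eq μ m hμm]

theorem comp_withDensity_min_enorm_one_eq (hm : K ∘ₘ m ≤ m) {F : Type*} [NormedAddCommGroup F]
    [NormedSpace ℝ F] {ρ : E → F} (hρ : StronglyMeasurable ρ) (hρ_int : Integrable ρ m)
    (hfix : (fun x => ∫ y, ρ y ∂K x) =ᵐ[m] ρ) :
    K ∘ₘ m.withDensity (fun x => min ‖ρ x‖ₑ 1) = m.withDensity (fun x => min ‖ρ x‖ₑ 1) :=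
  (isHarmonic_min_one_iff hm hρ.enorm hρ_int.2.ne).mp
    ((isHarmonic_enorm hm hρ hρ_int hfix).min_const hm hρ.enorm hρ_int.2.ne 1)

end ProbabilityTheory.Kernel

section Invariance

variable {E : Type*} [MeasurableSpace E] {m : Measure E} {ι : Type*} {K : ι → Kernel E E}
  [∀ i, IsMarkovKernel (K i)]

theorem exists_ne_zero_integral_ae_eq_of_comp_eq [SigmaFinite m] (hm : ∀ i, K i ∘ₘ m ≤ m)
    {μ : Measure E} [IsProbabilityMeasure μ] (hμm : μ ≪ m) (hinv : ∀ i, K i ∘ₘ μ = μ) :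
    ∃ ρ : Lp ℝ 1 m, ρ ≠ 0 ∧ ∀ i, (fun x => ∫ y, ρ y ∂K i x) =ᵐ[m] ρ := by
  set g : E → ℝ≥0∞ := fun x => min (μ.rnDeriv m x) 1
  have hg : Measurable g := (μ.measurable_rnDeriv m).min measurable_const
  have hg_fin : ∀ x, g x ≠ ∞ := fun x => ne_top_of_le_ne_top ENNReal.one_ne_top (min_le_right _ _)
  have hG : MemLp (fun x => (g x).toReal) 1 m := memLp_one_iff_integrable.mpr <|
    integrable_toReal_of_lintegral_ne_top hg.aemeasurable <| ne_top_of_le_ne_top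
      (by rw [Measure.lintegral_rnDeriv hμm]; exact measure_ne_top μ _)
      (lintegral_mono fun x => min_le_left _ _)
  refine ⟨hG.toLp _, fun h0 => ?_, fun i => ?_⟩
  · have hrn : μ.rnDeriv m =ᵐ[m] 0 := by
      filter_upwards [hG.coeFn_toLp.symm.trans (Lp.eq_zero_iff_ae_eq_zero.mp h0)] with x hx
      simpa [g] using ((ENNReal.toReal_eq_zero_iff _).mp hx).resolve_right (hg_fin x)
    refine IsProbabilityMeasure.ne_zero μ ?_
    rw [← Measure.withDensity_rnDeriv_eq μ m hμm, withDensity_congr_ae hrn, withDensity_zero]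
  · calc (fun x => ∫ y, hG.toLp _ y ∂K i x)
        =ᵐ[m] fun x => ∫ y, (g y).toReal ∂K i x :=
          Kernel.integral_ae_eq_of_ae_eq (hm i) hG.coeFn_toLp
      _ =ᵐ[m] fun x => (g x).toReal :=
          (Kernel.isHarmonic_min_rnDeriv_one (hm i) hμm (hinv i)).integral_toReal_ae_eq hg hg_fin
      _ =ᵐ[m] hG.toLp _ := hG.coeFn_toLp.symm

theorem exists_isProbabilityMeasure_comp_eq_of_integral_ae_eq (hm : ∀ i, K i ∘ₘ m ≤ m)
    {ρ : Lp ℝ 1 m} (hρ0 : ρ ≠ 0) (hfix : ∀ i, (fun x => ∫ y, ρ y ∂K i x) =ᵐ[m] ρ) :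
    ∃ μ : Measure E, IsProbabilityMeasure μ ∧ μ ≪ m ∧ ∀ i, K i ∘ₘ μ = μ := by
  set ν := m.withDensity fun x => min ‖ρ x‖ₑ 1
  have : IsFiniteMeasure ν := isFiniteMeasure_withDensity <| ne_top_of_le_ne_top
    (L1.integrable_coeFn ρ).2.ne (lintegral_mono fun x => min_le_left _ _)
  have : NeZero ν := ⟨fun h0 => hρ0 <| Lp.eq_zero_iff_ae_eq_zero.mpr <| by
    filter_upwards [(withDensity_eq_zero_iff (by fun_prop)).mp h0] with x hx
    simpa using hx⟩
  refine ⟨(ν Set.univ)⁻¹ • ν, inferInstance,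
    (withDensity_absolutelyContinuous _ _).smul_left _, fun i => ?_⟩
  rw [Measure.comp_smul, Kernel.comp_withDensity_min_enorm_one_eq (hm i)
    (Lp.stronglyMeasurable ρ) (L1.integrable_coeFn ρ) (hfix i)]

end Invariance

section Semigroup

variable {X : Type*} [NormedAddCommGroup X] [NormedSpace ℝ X]

lemma ContinuousLinearMap.norm_pow_apply_sub_le {T : X →L[ℝ] X} (hT : ∀ x, ‖T x‖ ≤ ‖x‖)
    (x : X) (n : ℕ) : ‖(T ^ n) x - x‖ ≤ n * ‖T x - x‖ := by
  induction n with
  | zero => simp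
  | succ n ih =>
    calc ‖(T ^ (n + 1)) x - x‖ = ‖T ((T ^ n) x - x) + (T x - x)‖ := by
          rw [pow_succ', mul_apply_eq_comp, map_sub, sub_add_sub_cancel]
      _ ≤ ‖(T ^ n) x - x‖ + ‖T x - x‖ := (norm_add_le _ _).trans (add_le_add (hT _) le_rfl)
      _ ≤ (n + 1 : ℕ) * ‖T x - x‖ := by rw [Nat.cast_succ]; linarith

variable {S : ℝ → X →L[ℝ] X}

lemma semigroup_mul_eq_pow (hS : ∀ s ≥ (0:ℝ), ∀ t ≥ (0:ℝ), S (s + t) = (S s).comp (S t))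
    {s : ℝ} (hs : 0 ≤ s) (n : ℕ) : S ((n + 1) * s) = S s ^ (n + 1) := by
  induction n with
  | zero => simp
  | succ n ih =>
    have hns : (0 : ℝ) ≤ (n + 1) * s := by positivity
    rw [pow_succ', ← ih, ContinuousLinearMap.mul_def, ← hS s hs _ hns]
    congr 1
    push_cast
    ring

theorem apply_eq_of_tendsto_smul_sub
    (hS : ∀ s ≥ (0:ℝ), ∀ t ≥ (0:ℝ), S (s + t) = (S s).comp (S t))
    (hS_contr : ∀ t > (0:ℝ), ∀ x, ‖S t x‖ ≤ ‖x‖) {ρ : X}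
    (hgen : Tendsto (fun t : ℝ => t⁻¹ • (S t ρ - ρ)) (𝓝[>] 0) (𝓝 0)) {t : ℝ} (ht : 0 < t) :
    S t ρ = ρ := by
  have hbound : ∀ n : ℕ,
      ‖S t ρ - ρ‖ ≤ t * ‖(t / (n + 1))⁻¹ • (S (t / (n + 1)) ρ - ρ)‖ := fun n => by
    have hs : 0 < t / (n + 1) := by positivity
    have hpow : S t = S (t / (n + 1)) ^ (n + 1) := by
      rw [← semigroup_mul_eq_pow hS hs.le, mul_div_cancel₀ _ (by positivity)]
    calc ‖S t ρ - ρ‖ ≤ (n + 1 : ℕ) * ‖S (t / (n + 1)) ρ - ρ‖ := by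
          rw [hpow]
          exact ContinuousLinearMap.norm_pow_apply_sub_le (hS_contr _ hs) ρ (n + 1)
      _ = t * ‖(t / (n + 1))⁻¹ • (S (t / (n + 1)) ρ - ρ)‖ := by
          rw [norm_smul, Real.norm_of_nonneg (inv_nonneg.mpr hs.le)]
          push_cast
          field_simp
  have hsteps : Tendsto (fun n : ℕ => t / (n + 1)) atTop (𝓝[>] 0) :=
    tendsto_nhdsWithin_iff.mpr ⟨tendsto_const_div_atTop_nhds_zero_nat t |>.comp
      (tendsto_add_atTop_nat 1) |>.congr fun n => by simp, .of_forall fun n => by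
        simp only [Set.mem_Ioi]; positivity⟩
  have hlim := (hgen.comp hsteps).norm.const_mul t
  rw [norm_zero, mul_zero] at hlim
  exact sub_eq_zero.mp (norm_le_zero_iff.mp (ge_of_tendsto' hlim hbound))

end Semigroup

lemma norm_le_of_ae_eq_integral {E : Type*} [MeasurableSpace E] {m : Measure E}
    {K : Kernel E E} (hm : K ∘ₘ m ≤ m) {T : Lp ℝ 1 m → Lp ℝ 1 m}
    (hT : ∀ f : Lp ℝ 1 m, (T f : E → ℝ) =ᵐ[m] fun x => ∫ y, f y ∂K x) (f : Lp ℝ 1 m) :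
    ‖T f‖ ≤ ‖f‖ := by
  rw [L1.norm_def, L1.norm_def]
  refine ENNReal.toReal_mono (L1.integrable_coeFn f).2.ne ?_
  calc ∫⁻ x, ‖T f x‖ₑ ∂m = ∫⁻ x, ‖∫ y, f y ∂K x‖ₑ ∂m :=
        lintegral_congr_ae ((hT f).mono fun x hx => congrArg (‖·‖ₑ) hx)
    _ ≤ ∫⁻ x, ∫⁻ y, ‖f y‖ₑ ∂K x ∂m := lintegral_mono fun x => enorm_integral_le_lintegral_enorm _
    _ ≤ ∫⁻ x, ‖f x‖ₑ ∂m :=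
        Kernel.lintegral_lintegral_le_of_comp_le hm (Lp.stronglyMeasurable f).enorm.aemeasurable

theorem invariant_probability_iff_harmonic_general
    {E : Type*} [MeasurableSpace E] (m : Measure E) [SigmaFinite m]
    (κ : ℝ → Kernel E E) [∀ t, IsMarkovKernel (κ t)]
    (hsub : ∀ t ≥ (0:ℝ), ∀ f : E → ℝ≥0∞, Measurable f →
      ∫⁻ x, ∫⁻ y, f y ∂(κ t x) ∂m ≤ ∫⁻ x, f x ∂m)
    (S : ℝ → (Lp ℝ 1 m →L[ℝ] Lp ℝ 1 m))
    (hSsemi : ∀ s ≥ (0:ℝ), ∀ t ≥ (0:ℝ), S (s + t) = (S s).comp (S t))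
    (hext : ∀ t ≥ (0:ℝ), ∀ g : Lp ℝ 1 m,
      (S t g : E → ℝ) =ᵐ[m] fun x => ∫ y, g y ∂(κ t x)) :
    (∃ μ : Measure E, IsProbabilityMeasure μ ∧ μ ≪ m ∧
        ∀ t > (0:ℝ), ∀ f : E → ℝ≥0∞, Measurable f →
          ∫⁻ x, ∫⁻ y, f y ∂(κ t x) ∂μ = ∫⁻ x, f x ∂μ) ↔
      (∃ ρ : Lp ℝ 1 m, ρ ≠ 0 ∧
        Tendsto (fun t : ℝ => t⁻¹ • (S t ρ - ρ)) (nhdsWithin 0 (Set.Ioi (0:ℝ)))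
          (nhds 0)) := by
  have hm : ∀ t : Set.Ioi (0:ℝ), κ t ∘ₘ m ≤ m := fun t =>
    Kernel.comp_le_of_lintegral_le (hsub t (le_of_lt t.2))
  have hfix_iff : ∀ t > (0:ℝ), ∀ ρ : Lp ℝ 1 m,
      S t ρ = ρ ↔ (fun x => ∫ y, ρ y ∂κ t x) =ᵐ[m] ρ := fun t ht ρ =>
    ⟨fun h => (hext t ht.le ρ).symm.trans (by rw [h]), fun h => Lp.ext ((hext t ht.le ρ).trans h)⟩
  constructor
  · rintro ⟨μ, hμ, hμm, hinv⟩
    obtain ⟨ρ, hρ0, hρ⟩ := exists_ne_zero_integral_ae_eq_of_comp_eq hm hμm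
      fun t => Kernel.comp_eq_iff_lintegral.mpr (hinv t t.2)
    refine ⟨ρ, hρ0, tendsto_const_nhds.congr' (eventually_nhdsWithin_of_forall fun t ht => ?_)⟩
    beta_reduce
    rw [(hfix_iff t ht ρ).mpr (hρ ⟨t, ht⟩), sub_self, smul_zero]
  · rintro ⟨ρ, hρ0, hgen⟩
    have hcontr : ∀ t > (0:ℝ), ∀ f, ‖S t f‖ ≤ ‖f‖ := fun t ht =>
      norm_le_of_ae_eq_integral (hm ⟨t, ht⟩) (hext t ht.le)
    obtain ⟨μ, hμ, hμm, hinv⟩ := exists_isProbabilityMeasure_comp_eq_of_integral_ae_eq hm hρ0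
      fun t => (hfix_iff t t.2 ρ).mp (apply_eq_of_tendsto_smul_sub hSsemi hcontr hgen t.2)
    exact ⟨μ, hμ, hμm, fun t ht => Kernel.comp_eq_iff_lintegral.mp (hinv ⟨t, ht⟩)⟩

/-- Let `m` be a σ-finite sub-invariant measure for a Markovian semigroup
`(P_t)` (Markov kernels `κ t`), extended to a strongly continuous semigroup `(S_t)` on
`L¹(E,m)` with generator `L₁`. There exists an invariant probability measure for `(P_t)`
absolutely continuous w.r.t. `m` iff there exists a nonzero `ρ ∈ D(L₁)` with `L₁ ρ = 0`,
i.e. `t⁻¹(S_t ρ − ρ) → 0` strongly as `t → 0⁺`. -/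
theorem invariant_probability_iff_harmonic
    {E : Type*} [MeasurableSpace E] (m : Measure E) [SigmaFinite m]
    (κ : ℝ → Kernel E E) [∀ t, IsMarkovKernel (κ t)]
    (hκ0 : κ 0 = Kernel.id)
    (hκsemi : ∀ s ≥ (0:ℝ), ∀ t ≥ (0:ℝ), κ (s + t) = (κ s).comp (κ t))
    (hsub : ∀ t ≥ (0:ℝ), ∀ f : E → ℝ≥0∞, Measurable f →
      ∫⁻ x, ∫⁻ y, f y ∂(κ t x) ∂m ≤ ∫⁻ x, f x ∂m)
    (S : ℝ → (Lp ℝ 1 m →L[ℝ] Lp ℝ 1 m))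
    (hS0 : S 0 = ContinuousLinearMap.id ℝ (Lp ℝ 1 m))
    (hSsemi : ∀ s ≥ (0:ℝ), ∀ t ≥ (0:ℝ), S (s + t) = (S s).comp (S t))
    (hSsc : ∀ g : Lp ℝ 1 m,
      Tendsto (fun t => S t g) (nhdsWithin 0 (Set.Ici (0:ℝ))) (nhds g))
    (hext : ∀ t ≥ (0:ℝ), ∀ g : Lp ℝ 1 m,
      (S t g : E → ℝ) =ᵐ[m] fun x => ∫ y, g y ∂(κ t x)) :
    (∃ μ : Measure E, IsProbabilityMeasure μ ∧ μ ≪ m ∧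
        ∀ t > (0:ℝ), ∀ f : E → ℝ≥0∞, Measurable f →
          ∫⁻ x, ∫⁻ y, f y ∂(κ t x) ∂μ = ∫⁻ x, f x ∂μ) ↔
      (∃ ρ : Lp ℝ 1 m, ρ ≠ 0 ∧
        Tendsto (fun t : ℝ => t⁻¹ • (S t ρ - ρ)) (nhdsWithin 0 (Set.Ioi (0:ℝ)))
          (nhds 0)) :=
  invariant_probability_iff_harmonic_general m κ hsub S hSsemi hext
end

section
/- Let (P_t) be a Markovian transition function with finite auxiliary measure m, and let (P_t*) denote the adjoint semigroup restricted to L^1(m). A probability measure ρ·m (ρ ∈ L^1(m), ρ ≥ 0) is invariant with respect to (P_t) if and only if ρ is m-co-excessive, i.e. P_t* ρ ≤ ρ m-a.e. for all t ≥ 0. -/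
open MeasureTheory ProbabilityTheory Filter
open scoped NNReal ENNReal

/-- Let `(P_t)` (Markov kernels `κ t`) be a Markovian transition function with
finite auxiliary measure `m`, and `(T_t)` the adjoint semigroup restricted to `L¹(m)`
(`∫ (P_t f) g dm = ∫ f (T_t g) dm`). A probability measure `ρ·m` (`ρ ∈ L¹(m)`, `ρ ≥ 0`) is
invariant for `(P_t)` iff `ρ` is m-co-excessive: `T_t ρ ≤ ρ` m-a.e. for all `t ≥ 0`. -/
theorem invariant_iff_coexcessive
    {E : Type*} [MeasurableSpace E] (m : Measure E) [IsFiniteMeasure m]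
    (κ : ℝ → Kernel E E) [∀ t, IsMarkovKernel (κ t)]
    (hκ0 : κ 0 = Kernel.id)
    (hκsemi : ∀ s ≥ (0:ℝ), ∀ t ≥ (0:ℝ), κ (s + t) = (κ s).comp (κ t))
    (haux : ∀ t > (0:ℝ), ∀ f : E → ℝ≥0∞, Measurable f →
      ∫⁻ x, f x ∂m = 0 → ∫⁻ x, ∫⁻ y, f y ∂(κ t x) ∂m = 0)
    (T : ℝ → (Lp ℝ 1 m →L[ℝ] Lp ℝ 1 m))
    (hT0 : T 0 = ContinuousLinearMap.id ℝ (Lp ℝ 1 m))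
    (hTsemi : ∀ s ≥ (0:ℝ), ∀ t ≥ (0:ℝ), T (s + t) = (T s).comp (T t))
    (hdual : ∀ t ≥ (0:ℝ), ∀ f : E → ℝ, Measurable f → (∃ C, ∀ x, |f x| ≤ C) →
      ∀ g : Lp ℝ 1 m, ∫ x, (∫ y, f y ∂(κ t x)) * g x ∂m = ∫ x, f x * (T t g) x ∂m)
    (ρ : Lp ℝ 1 m) (hρ0 : 0 ≤ᵐ[m] (ρ : E → ℝ)) (hρ1 : ∫ x, ρ x ∂m = 1) :
    (∀ t ≥ (0:ℝ), ∀ f : E → ℝ, Measurable f → (∃ C, ∀ x, |f x| ≤ C) →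
        ∫ x, (∫ y, f y ∂(κ t x)) * ρ x ∂m = ∫ x, f x * ρ x ∂m) ↔
      ∀ t ≥ (0:ℝ), ∀ᵐ x ∂m, (T t ρ : E → ℝ) x ≤ ρ x := by
  have hρint : Integrable (ρ : E → ℝ) m := L1.integrable_coeFn ρ
  have hTint : ∀ t, Integrable ((T t ρ : Lp ℝ 1 m) : E → ℝ) m :=
    fun t => L1.integrable_coeFn _
  -- ∫ T t ρ = ∫ ρ for all t ≥ 0 (take f = 1)
  have hone : ∀ t ≥ (0:ℝ), ∫ x, (T t ρ : E → ℝ) x ∂m = ∫ x, ρ x ∂m := by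
    intro t ht
    have h := hdual t ht (fun _ => (1:ℝ)) measurable_const ⟨1, fun x => by simp⟩ ρ
    simpa using h.symm
  constructor
  · intro hinv t ht
    have key : (T t ρ : E → ℝ) =ᵐ[m] (ρ : E → ℝ) := by
      refine Integrable.ae_eq_of_forall_setIntegral_eq _ _ (hTint t) hρint ?_
      intro s hs _
      set f : E → ℝ := s.indicator (fun _ => (1:ℝ)) with hf
      have hfm : Measurable f := (measurable_const (a := (1:ℝ))).indicator hs
      have hfb : ∃ C, ∀ x, |f x| ≤ C := by
        refine ⟨1, fun x => ?_⟩
        by_cases hx : x ∈ s <;> simp [hf, Set.indicator_apply, hx]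
      have h1 := hdual t ht f hfm hfb ρ
      have h2 := hinv t ht f hfm hfb
      have h3 : ∫ x, f x * (T t ρ : E → ℝ) x ∂m = ∫ x, f x * ρ x ∂m := by
        rw [← h1, h2]
      have e1 : ∀ g : E → ℝ, ∫ x, f x * g x ∂m = ∫ x in s, g x ∂m := by
        intro g
        rw [← integral_indicator hs]
        congr 1
        ext x
        by_cases hx : x ∈ s <;> simp [hf, Set.indicator_apply, hx]
      rw [e1, e1] at h3
      exact h3
    filter_upwards [key] with x hx using le_of_eq hx
  · intro hco t ht f hfm hfb
    -- T t ρ = ρ a.e. since T t ρ ≤ ρ and integrals agree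
    have key : (ρ : E → ℝ) =ᵐ[m] (T t ρ : E → ℝ) := by
      have hnn : 0 ≤ᵐ[m] fun x => (ρ : E → ℝ) x - (T t ρ : E → ℝ) x := by
        filter_upwards [hco t ht] with x hx using sub_nonneg.mpr hx
      have hint : Integrable (fun x => (ρ : E → ℝ) x - (T t ρ : E → ℝ) x) m :=
        hρint.sub (hTint t)
      have hz : ∫ x, ((ρ : E → ℝ) x - (T t ρ : E → ℝ) x) ∂m = 0 := by
        rw [integral_sub hρint (hTint t), hone t ht, sub_self]
      have := (integral_eq_zero_iff_of_nonneg_ae hnn hint).mp hz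
      filter_upwards [this] with x hx
      have : (ρ : E → ℝ) x - (T t ρ : E → ℝ) x = 0 := hx
      linarith
    rw [hdual t ht f hfm hfb ρ]
    refine integral_congr_ae ?_
    filter_upwards [key] with x hx
    rw [← hx]
end
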